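/- arXiv:2208.05857 — 2 statements merged into one kernel-verified Lean document; each statement's English description precedes it below -/
import Mathlib

section
/- Let L be a real symmetric n×n matrix with zero row sums and kernel spanned by the all-ones vector, and set L⁺ := (L - (1/n)J_n)⁻¹ + (1/n)J_n, where J_n is the all-ones matrix. Then L⁺ satisfies the four Moore–Penrose equations: L L⁺ L = L, L⁺ L L⁺ = L⁺, (L L⁺)ᵀ = L L⁺, and (L⁺ L)ᵀ = L⁺ L. -/
open Matrix

theorem laplacian_pseudoinverse_formula (n : ℕ) (hn : 0 < n)
    (L : Matrix (Fin n) (Fin n) ℝ)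
    (hsymm : Lᵀ = L)
    (hrow : ∀ p, ∑ q, L p q = 0)
    (hker : ∀ v : Fin n → ℝ, L.mulVec v = 0 ↔ ∃ k : ℝ, v = fun _ => k)
    (J : Matrix (Fin n) (Fin n) ℝ) (hJ : J = Matrix.of fun _ _ => (1 : ℝ))
    (Lp : Matrix (Fin n) (Fin n) ℝ)
    (hLp : Lp = (L - ((n : ℝ)⁻¹) • J)⁻¹ + ((n : ℝ)⁻¹) • J) :
    L * Lp * L = L ∧ Lp * L * Lp = Lp ∧ (L * Lp)ᵀ = L * Lp ∧ (Lp * L)ᵀ = Lp * L := by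
  have hc : (n : ℝ) ≠ 0 := Nat.cast_ne_zero.mpr hn.ne'
  set c : ℝ := (n : ℝ)⁻¹ with hcdef
  set M : Matrix (Fin n) (Fin n) ℝ := L - c • J with hM
  have hcn : c * (n : ℝ) = 1 := inv_mul_cancel₀ hc
  have hJs : Jᵀ = J := by ext p q; simp [hJ]
  have hLJ : L * J = 0 := by
    ext p q; simp [hJ, Matrix.mul_apply, hrow]
  have hJL : J * L = 0 := by
    have h := congrArg Matrix.transpose hLJ
    simpa [Matrix.transpose_mul, hJs, hsymm] using h
  have hJJ : J * J = (n : ℝ) • J := by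
    ext p q
    simp [hJ, Matrix.mul_apply, Finset.sum_const]
  have hMJ : M * J = -J := by
    rw [hM, Matrix.sub_mul, hLJ, Matrix.smul_mul, hJJ, smul_smul, hcn, one_smul,
      zero_sub]
  have hJM : J * M = -J := by
    rw [hM, Matrix.mul_sub, hJL, Matrix.mul_smul, hJJ, smul_smul, hcn, one_smul,
      zero_sub]
  have hcol : ∀ q, ∑ p, L p q = 0 := by
    intro q
    have h : ∀ p, L p q = L q p := fun p => congrFun (congrFun hsymm q) p
    rw [Finset.sum_congr rfl fun p _ => h p, hrow]
  -- invertibility of M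
  have hdet : M.det ≠ 0 := by
    intro h0
    obtain ⟨v, hv0, hv⟩ := (Matrix.exists_mulVec_eq_zero_iff).mpr h0
    have hsum : ∑ i, v i = 0 := by
      have h1 : ∑ p, M.mulVec v p = 0 := by rw [hv]; simp
      have h2 : ∑ p, M.mulVec v p = -∑ i, v i := by
        simp only [Matrix.mulVec, dotProduct, hM, Matrix.sub_apply,
          Matrix.smul_apply, hJ, Matrix.of_apply, smul_eq_mul, mul_one]
        rw [Finset.sum_comm]
        have : ∀ q : Fin n, ∑ p, (L p q - c) * v q = -v q := by
          intro q
          rw [← Finset.sum_mul]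
          have : ∑ p : Fin n, (L p q - c) = -1 := by
            rw [Finset.sum_sub_distrib, hcol, Finset.sum_const, zero_sub]
            simp only [Finset.card_univ, Fintype.card_fin, nsmul_eq_mul]
            linarith [hcn]
          rw [this]; ring
        rw [Finset.sum_congr rfl fun q _ => this q, ← Finset.sum_neg_distrib]
      rw [h2, neg_eq_zero] at h1
      exact h1
    have hJv : J.mulVec v = 0 := by
      ext p
      simp [hJ, Matrix.mulVec, dotProduct, hsum]
    have hLv : L.mulVec v = 0 := by
      have := hv
      rw [hM, Matrix.sub_mulVec, Matrix.smul_mulVec, hJv, smul_zero,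
        sub_zero] at this
      exact this
    obtain ⟨k, hk⟩ := (hker v).mp hLv
    have : (n : ℝ) * k = 0 := by
      rw [hk] at hsum
      simpa [Finset.sum_const, Finset.card_univ, mul_comm] using hsum
    have hk0 : k = 0 := by
      rcases mul_eq_zero.mp this with h | h
      · exact absurd h hc
      · exact h
    exact hv0 (by rw [hk, hk0]; rfl)
  have hdu : IsUnit M.det := isUnit_iff_ne_zero.mpr hdet
  have hMN : M * M⁻¹ = 1 := Matrix.mul_nonsing_inv M hdu
  have hNM : M⁻¹ * M = 1 := Matrix.nonsing_inv_mul M hdu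
  have hNJ : M⁻¹ * J = -J := by
    have h : M⁻¹ * (M * J) = M⁻¹ * (-J) := by rw [hMJ]
    rw [← Matrix.mul_assoc, hNM, Matrix.one_mul, Matrix.mul_neg] at h
    exact (neg_eq_iff_eq_neg.mpr h).symm
  have hJN : J * M⁻¹ = -J := by
    have h : (J * M) * M⁻¹ = (-J) * M⁻¹ := by rw [hJM]
    rw [Matrix.mul_assoc, hMN, Matrix.mul_one, Matrix.neg_mul] at h
    exact (neg_eq_iff_eq_neg.mpr h).symm
  have hL' : L = M + c • J := by rw [hM, sub_add_cancel]
  have hcc : c • ((c : ℝ) • ((n : ℝ) • J)) = c • J := by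
    rw [smul_smul, smul_smul, mul_assoc, hcn, mul_one]
  have key1 : L * Lp = 1 - c • J := by
    rw [hLp, hL', add_mul, mul_add, mul_add, hMN, Matrix.mul_smul, hMJ,
      Matrix.smul_mul, hJN, Matrix.smul_mul, Matrix.mul_smul, hJJ, hcc]
    simp only [smul_neg]
    abel
  have key2 : Lp * L = 1 - c • J := by
    rw [hLp, hL', add_mul, mul_add, mul_add, hNM, Matrix.mul_smul, hNJ,
      Matrix.smul_mul, hJM, Matrix.smul_mul, Matrix.mul_smul, hJJ, hcc]
    simp only [smul_neg]
    abel
  have hJLp : J * Lp = 0 := by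
    rw [hLp, mul_add, hJN, Matrix.mul_smul, hJJ, smul_smul, hcn, one_smul,
      neg_add_cancel]
  refine ⟨?_, ?_, ?_, ?_⟩
  · rw [key1, Matrix.sub_mul, Matrix.one_mul, Matrix.smul_mul, hJL, smul_zero,
      sub_zero]
  · have hLpJ : Lp * J = 0 := by
      rw [hLp, add_mul, hNJ, Matrix.smul_mul, hJJ, smul_smul, hcn, one_smul,
        neg_add_cancel]
    rw [Matrix.mul_assoc, key1, Matrix.mul_sub, Matrix.mul_one, Matrix.mul_smul,
      hLpJ, smul_zero, sub_zero]
  · rw [key1, Matrix.transpose_sub, Matrix.transpose_one, Matrix.transpose_smul, hJs]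
  · rw [key2, Matrix.transpose_sub, Matrix.transpose_one, Matrix.transpose_smul, hJs]
end

section
/- With the setup of formula (3.1): V a finite set, a : V → ℤ with d := Σ_s a_s ≠ -2, τ ∈ ℝ, r : X × X → ℝ symmetric with r(x,x)=0, j_s(x,y) := (1/2)(r(s,x)+r(s,y)-r(x,y)), c := (1/(2(d+2)²))(8τ(d+1) + Σ_{s,t} a_s a_t r(s,t)), and g(x,y) := (1/(d+2))(Σ_s a_s j_s(x,y) + 4τ - r(x,y)) - c. Then the function x ↦ Σ_{t∈V} a_t g(x,t) + g(x,x) is constant on X. -/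
theorem zhang_defining_property {X : Type*} [DecidableEq X]
    (V : Finset X) (a : X → ℤ) (τ : ℝ) (r : X → X → ℝ)
    (hrsymm : ∀ x y, r x y = r y x) (hrdiag : ∀ x, r x x = 0)
    (d : ℤ) (hd : d = ∑ s ∈ V, a s) (hd2 : d ≠ -2)
    (j : X → X → X → ℝ)
    (hj : ∀ s x y, j s x y = (1 / 2) * (r s x + r s y - r x y))
    (c : ℝ)
    (hc : c = (1 / (2 * ((d : ℝ) + 2) ^ 2)) *
      (8 * τ * ((d : ℝ) + 1) + ∑ s ∈ V, ∑ t ∈ V, (a s : ℝ) * (a t : ℝ) * r s t))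
    (g : X → X → ℝ)
    (hg : ∀ x y, g x y =
      (1 / ((d : ℝ) + 2)) * ((∑ s ∈ V, (a s : ℝ) * j s x y) + 4 * τ - r x y) - c) :
    ∀ x y : X, (∑ t ∈ V, (a t : ℝ) * g x t) + g x x
      = (∑ t ∈ V, (a t : ℝ) * g y t) + g y y := by
  have hdcast : ((d : ℝ)) = ∑ s ∈ V, (a s : ℝ) := by
    rw [hd]; push_cast; rfl
  set A : X → ℝ := fun x => ∑ s ∈ V, (a s : ℝ) * r s x with hA
  have hsum : ∀ x y, (∑ s ∈ V, (a s : ℝ) * j s x y)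
      = (1/2) * A x + (1/2) * A y - (1/2) * (d : ℝ) * r x y := by
    intro x y
    simp only [hj, hA, hdcast, Finset.sum_mul, Finset.mul_sum,
      ← Finset.sum_add_distrib, ← Finset.sum_sub_distrib]
    apply Finset.sum_congr rfl
    intros; ring
  have hg' : ∀ x y, g x y =
      (1 / ((d : ℝ) + 2)) * ((1/2) * A x + (1/2) * A y
        - (1/2) * (d : ℝ) * r x y + 4 * τ - r x y) - c := by
    intro x y; rw [hg, hsum]
  have hArx : ∀ x, (∑ t ∈ V, (a t : ℝ) * r x t) = A x := by
    intro x
    apply Finset.sum_congr rfl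
    intro t _; rw [hrsymm]
  have key : ∀ x, (∑ t ∈ V, (a t : ℝ) * g x t) + g x x
      = (1 / ((d : ℝ) + 2)) * ((1/2) * (∑ t ∈ V, (a t : ℝ) * A t)
          + 4 * τ * ((d : ℝ) + 1)) - c * ((d : ℝ) + 1) := by
    intro x
    have expand : (∑ t ∈ V, (a t : ℝ) * g x t)
        = (1 / ((d : ℝ) + 2)) * ((1/2) * (d : ℝ) * A x
            + (1/2) * (∑ t ∈ V, (a t : ℝ) * A t)
            - (1/2) * (d : ℝ) * A x + 4 * τ * (d : ℝ) - A x) - c * (d : ℝ) := by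
      have : ∀ t ∈ V, (a t : ℝ) * g x t
          = (1 / ((d : ℝ) + 2)) * ((1/2) * ((a t : ℝ)) * A x + (1/2) * ((a t : ℝ) * A t)
            - (1/2) * (d : ℝ) * ((a t : ℝ) * r x t) + 4 * τ * (a t : ℝ)
            - (a t : ℝ) * r x t) - c * (a t : ℝ) := by
        intro t _; rw [hg' x t]; ring
      rw [Finset.sum_congr rfl this]
      rw [Finset.sum_sub_distrib]
      congr 1
      · rw [← Finset.mul_sum]
        congr 1
        rw [Finset.sum_sub_distrib, Finset.sum_add_distrib, Finset.sum_sub_distrib,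
          Finset.sum_add_distrib, ← Finset.mul_sum, ← Finset.mul_sum, ← Finset.mul_sum,
          ← Finset.sum_mul, hArx, ← hdcast]
        have h2 : (∑ i ∈ V, 1 / 2 * (a i : ℝ)) = 1 / 2 * (d : ℝ) := by
          rw [hdcast, Finset.mul_sum]
        rw [h2]
      · rw [← Finset.mul_sum, ← hdcast]
    rw [expand, hg' x x, hrdiag]
    ring
  intro x y
  rw [key x, key y]
end
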